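/- arXiv:1712.06806 — 2 statements merged into one kernel-verified Lean document; each statement's English description precedes it below -/
import Mathlib

section
/- In the extended annihilation algebra A(B(p))^e of B(p), the element T - (1/p)L_{0,-1} is central: it commutes with T and with all L_{i,m} for i ≥ 0, m ≥ -1. -/
/-- Formal `ℂ`-linear combinations of the symbols `L_{i,m}`, `i ∈ ℤ≥0`, `m ∈ ℤ`
(only `m ≥ -1` is used). -/
abbrev AnnAlg := (ℕ × ℤ) →₀ ℂ

/-- `[L_{i,m}, L_{j,n}] = ((j+p)(m+1) - (i+p)(n+1)) L_{i+j,m+n}`, bilinearly. -/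
noncomputable def annBracket (p : ℂ) (x y : AnnAlg) : AnnAlg :=
  x.sum fun a ca => y.sum fun b cb =>
    (ca * cb * (((b.1 : ℂ) + p) * ((a.2 : ℂ) + 1) - ((a.1 : ℂ) + p) * ((b.2 : ℂ) + 1))) •
      Finsupp.single (a.1 + b.1, a.2 + b.2) (1 : ℂ)

/-- `[T, L_{i,m}] = -(m+1) L_{i,m-1}`, extended linearly. -/
noncomputable def tAction (x : AnnAlg) : AnnAlg :=
  x.sum fun a c => (c * (-((a.2 : ℂ) + 1))) • Finsupp.single (a.1, a.2 - 1) (1 : ℂ)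

/-- Elements of `A(B(p))^e = ℂT ⋉ A(B(p))`: pairs `(t, x)` representing `tT + x`. -/
abbrev ExtAnnAlg := ℂ × AnnAlg

/-- The bracket of `A(B(p))^e`. -/
noncomputable def extBracket (p : ℂ) (u v : ExtAnnAlg) : ExtAnnAlg :=
  (0, annBracket p u.2 v.2 + u.1 • tAction v.2 - v.1 • tAction u.2)

/-!
On the `L_{i,m}`, `ad L_{0,-1}` is `p • ad T`, while `[T, L_{0,-1}] = 0`. Hence
`ad (T - p⁻¹ L_{0,-1})` vanishes on every `L_{i,m}` and on `T`.
-/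

open Finsupp

theorem tAction_single (a : ℕ × ℤ) (c : ℂ) :
    tAction (single a c) = single (a.1, a.2 - 1) (-((a.2 : ℂ) + 1) * c) := by
  rw [tAction, sum_single_index (by simp), smul_single, smul_eq_mul, mul_one, mul_comm]

theorem tAction_single_neg_one (i : ℕ) (c : ℂ) : tAction (single (i, -1) c) = 0 := by
  simp [tAction_single]

theorem annBracket_single_single (p : ℂ) (a b : ℕ × ℤ) (c d : ℂ) :
    annBracket p (single a c) (single b d) =
      single (a.1 + b.1, a.2 + b.2)
        (c * d * (((b.1 : ℂ) + p) * ((a.2 : ℂ) + 1) - ((a.1 : ℂ) + p) * ((b.2 : ℂ) + 1))) := by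
  rw [annBracket, sum_single_index (by simp), sum_single_index (by simp), smul_single,
    smul_eq_mul, mul_one]

theorem annBracket_zero_right (p : ℂ) (x : AnnAlg) : annBracket p x 0 = 0 := by
  simp [annBracket]

theorem annBracket_single_zero_neg_one (p c : ℂ) (b : ℕ × ℤ) (d : ℂ) :
    annBracket p (single (0, -1) c) (single b d) = (c * p) • tAction (single b d) := by
  rw [annBracket_single_single, tAction_single, smul_single]
  congr 1
  · simp only [zero_add, Prod.mk.injEq, true_and]
    omega
  · push_cast
    ring

/-- In `A(B(p))^e`, the element `T - (1/p) L_{0,-1}` is central: it commutes with `T`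
and with every basis element `L_{i,m}` (`i ≥ 0`, `m ≥ -1`). -/
theorem central_element (p : ℂ) (hp : p ≠ 0) :
    extBracket p (1, -(p⁻¹ • Finsupp.single ((0 : ℕ), (-1 : ℤ)) (1 : ℂ))) ((1 : ℂ), 0) = 0 ∧
    ∀ (i : ℕ) (m : ℤ), (-1 : ℤ) ≤ m →
      extBracket p (1, -(p⁻¹ • Finsupp.single ((0 : ℕ), (-1 : ℤ)) (1 : ℂ)))
        (0, Finsupp.single (i, m) 1) = 0 := by
  rw [smul_single_one, ← single_neg]
  refine ⟨?_, fun i m _ => ?_⟩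
  · rw [extBracket, annBracket_zero_right, tAction_single_neg_one]
    simp [tAction]
  · have hcoeff : -p⁻¹ * p = -1 := by rw [neg_mul, inv_mul_cancel₀ hp]
    rw [extBracket, annBracket_single_zero_neg_one, hcoeff, tAction_single_neg_one, neg_one_smul,
      one_smul, zero_smul, neg_add_cancel, sub_zero, Prod.mk_zero_zero]
end

section
/- Take p = -1 and β ∈ ℂ. The free rank-one ℂ[∂]-module M = ℂ[∂]v with λ-actions L_0 λ v = -(∂ + Δλ + α)v, L_1 λ v = βv, and L_i λ v = 0 for i ≥ 2 is a conformal module over B(-1). -/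
open MvPolynomial

/-- Elements of `B(-1)`: coefficients in `ℂ[∂]` on the basis `{L_i}`. -/
abbrev BlockAlg := ℕ →₀ Polynomial ℂ

/-- `ℂ[∂,λ,μ]`, with `∂ = X 0`, `λ = X 1`, `μ = X 2`. -/
abbrev P3 := MvPolynomial (Fin 3) ℂ

/-- The λ-action of `a = Σ f_i(∂) L_i ∈ B(-1)` with spectral parameter `s` on a module
element `w·v` of `M_{Δ,α,β}`: `L_0 λ v = -(∂+Δλ+α)v`, `L_1 λ v = βv`, `L_i λ v = 0`
for `i ≥ 2`. -/
noncomputable def act (Δ α β : ℂ) (a : BlockAlg) (w s : P3) : P3 :=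
  (Polynomial.aeval (-s) (a 0)) * (aeval ![X 0 + s, X 1, X 2] w) *
      (-(X 0 + C Δ * s + C α))
    + (Polynomial.aeval (-s) (a 1)) * (aeval ![X 0 + s, X 1, X 2] w) * C β

/-- The λ-bracket of `B(-1)`: `[f(∂)L_i λ g(∂)L_j] = f(-λ)g(∂+λ)((i-1)∂+(i+j-2)λ)L_{i+j}`. -/
noncomputable def BR (a b : BlockAlg) : ℕ →₀ P3 :=
  a.sum fun i f => b.sum fun j g =>
    Finsupp.single (i + j)
      ((Polynomial.aeval (-(X 1) : P3) f) * (Polynomial.aeval ((X 0 : P3) + X 1) g) *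
        (C ((i : ℂ) - 1) * X 0 + C ((i : ℂ) + (j : ℂ) - 2) * X 1))

/-- The action of an element of `ℂ[∂,λ]⊗B(-1)` (such as `[a λ b]`) with spectral
parameter `s` on `w·v`: coefficients get `∂ ↦ -s`, and only `L_0` and `L_1` act. -/
noncomputable def actC (Δ α β : ℂ) (c : ℕ →₀ P3) (w s : P3) : P3 :=
  (aeval ![-s, X 1, X 2] (c 0)) * (aeval ![X 0 + s, X 1, X 2] w) *
      (-(X 0 + C Δ * s + C α))
    + (aeval ![-s, X 1, X 2] (c 1)) * (aeval ![X 0 + s, X 1, X 2] w) * C β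

/-- Multiplication by `∂` on `B(-1)`. -/
noncomputable def dMul (a : BlockAlg) : BlockAlg :=
  Finsupp.mapRange (Polynomial.X * ·) (by simp) a

/-!
On a monomial, `f(∂)L_k λ w(∂)v = f(-λ) w(∂+λ) c_k(∂,λ) v` with `c_0 = -(∂+Δλ+α)`, `c_1 = β`
and `c_k = 0` for `k ≥ 2` (`actionCoeff`). Everything is additive in `a` and `b`, so the
bracket axiom only has to be checked on monomials `f L_i`, `g L_j`; there the two shifts
`∂ ↦ ∂+λ`, `∂ ↦ ∂+μ` compose to `∂ ↦ ∂+λ+μ` on both sides and the common factor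
`f(-λ) g(-μ) w(∂+λ+μ)` splits off, leaving the scalar identity
`((i-1)(-λ-μ) + (i+j-2)λ) c_{i+j}(∂,λ+μ) = c_j(∂+λ,μ) c_i(∂,λ) - c_i(∂+μ,λ) c_j(∂,μ)`,
a finite case check.
-/

section Coefficients

variable {R S : Type*} [CommRing R] [Algebra ℂ R] [CommRing S] [Algebra ℂ S] (Δ α β : ℂ)

def actionCoeff : ℕ → R → R → R
  | 0, d, s => -(d + algebraMap ℂ R Δ * s + algebraMap ℂ R α)
  | 1, _, _ => algebraMap ℂ R β
  | _ + 2, _, _ => 0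

lemma map_actionCoeff (φ : R →ₐ[ℂ] S) (k : ℕ) (d s : R) :
    φ (actionCoeff Δ α β k d s) = actionCoeff Δ α β k (φ d) (φ s) := by
  rcases k with _ | _ | k <;> simp [actionCoeff]

lemma actionCoeff_bracket (i j : ℕ) (d l m : R) :
    (algebraMap ℂ R ((i : ℂ) - 1) * -(l + m) + algebraMap ℂ R ((i : ℂ) + j - 2) * l)
        * actionCoeff Δ α β (i + j) d (l + m)
      = actionCoeff Δ α β j (d + l) m * actionCoeff Δ α β i d l
        - actionCoeff Δ α β i (d + m) l * actionCoeff Δ α β j d m := by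
  rcases i with _ | _ | i <;> rcases j with _ | _ | j <;>
    simp [actionCoeff, map_ofNat] <;> ring

end Coefficients

section Module

variable (Δ α β : ℂ)

lemma act_single (k : ℕ) (f : Polynomial ℂ) (w s : P3) :
    act Δ α β (Finsupp.single k f) w s
      = Polynomial.aeval (-s) f * aeval ![X 0 + s, X 1, X 2] w * actionCoeff Δ α β k (X 0) s := by
  rcases k with _ | _ | k <;> simp [act, actionCoeff]

lemma actC_single (k : ℕ) (c w s : P3) :
    actC Δ α β (Finsupp.single k c) w s
      = aeval ![-s, X 1, X 2] c * aeval ![X 0 + s, X 1, X 2] w * actionCoeff Δ α β k (X 0) s := by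
  rcases k with _ | _ | k <;> simp [actC, actionCoeff]

lemma BR_single_single (i j : ℕ) (f g : Polynomial ℂ) :
    BR (Finsupp.single i f) (Finsupp.single j g)
      = Finsupp.single (i + j)
          (Polynomial.aeval (-(X 1) : P3) f * Polynomial.aeval ((X 0 : P3) + X 1) g *
            (C ((i : ℂ) - 1) * X 0 + C ((i : ℂ) + (j : ℂ) - 2) * X 1)) := by
  simp [BR]

lemma BR_zero_left (b : BlockAlg) : BR 0 b = 0 := by simp [BR]

lemma BR_zero_right (a : BlockAlg) : BR a 0 = 0 := by simp [BR]

lemma BR_add_left (a a' b : BlockAlg) : BR (a + a') b = BR a b + BR a' b := by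
  unfold BR
  refine Finsupp.sum_add_index' (fun i => by simp) fun i f f' => ?_
  rw [← Finsupp.sum_add]
  simp only [map_add, add_mul, Finsupp.single_add]

lemma BR_add_right (a b b' : BlockAlg) : BR a (b + b') = BR a b + BR a b' := by
  unfold BR
  rw [← Finsupp.sum_add]
  refine Finsupp.sum_congr fun i _ => Finsupp.sum_add_index' (fun j => by simp) fun j g g' => ?_
  rw [← Finsupp.single_add, map_add]
  congr 1
  ring

lemma act_zero_left (w s : P3) : act Δ α β 0 w s = 0 := by simp [act]

lemma act_zero_right (a : BlockAlg) (s : P3) : act Δ α β a 0 s = 0 := by simp [act]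

lemma act_add_left (a a' : BlockAlg) (w s : P3) :
    act Δ α β (a + a') w s = act Δ α β a w s + act Δ α β a' w s := by
  simp only [act, Finsupp.add_apply, map_add]
  ring

lemma act_add_right (a : BlockAlg) (w w' s : P3) :
    act Δ α β a (w + w') s = act Δ α β a w s + act Δ α β a w' s := by
  simp only [act, map_add]
  ring

lemma actC_zero (w s : P3) : actC Δ α β 0 w s = 0 := by simp [actC]

lemma actC_add (c c' : ℕ →₀ P3) (w s : P3) :
    actC Δ α β (c + c') w s = actC Δ α β c w s + actC Δ α β c' w s := by
  simp only [actC, Finsupp.add_apply, map_add]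
  ring

lemma act_dMul (a : BlockAlg) (w s : P3) : act Δ α β (dMul a) w s = -s * act Δ α β a w s := by
  simp only [act, dMul, Finsupp.mapRange_apply, map_mul, Polynomial.aeval_X]
  ring

lemma act_X_zero_mul (a : BlockAlg) (w s : P3) :
    act Δ α β a (X 0 * w) s = (X 0 + s) * act Δ α β a w s := by
  simp only [act, map_mul, aeval_X, Matrix.cons_val_zero]
  ring

lemma aeval_shift_aeval_shift {s t : P3} (ht : aeval ![X 0 + s, X 1, X 2] t = t) (w : P3) :
    aeval ![X 0 + s, X 1, X 2] (aeval ![X 0 + t, X 1, X 2] w)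
      = aeval ![X 0 + (s + t), X 1, X 2] w := by
  rw [comp_aeval_apply]
  refine congrArg (fun σ => aeval σ w) (funext fun i => ?_)
  fin_cases i <;> simp [ht, add_assoc, -aeval_eq_bind₁]

lemma actC_BR_single_single (i j : ℕ) (f g : Polynomial ℂ) (w : P3) :
    actC Δ α β (BR (Finsupp.single i f) (Finsupp.single j g)) w (X 1 + X 2)
      = act Δ α β (Finsupp.single i f) (act Δ α β (Finsupp.single j g) w (X 2)) (X 1)
        - act Δ α β (Finsupp.single j g) (act Δ α β (Finsupp.single i f) w (X 1)) (X 2) := by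
  have h₁ := aeval_shift_aeval_shift (s := X 1) (t := X 2) (by simp) w
  have h₂ := aeval_shift_aeval_shift (s := X 2) (t := X 1) (by simp) w
  rw [add_comm (X 2)] at h₂
  have hcoeff := actionCoeff_bracket Δ α β i j (X 0 : P3) (X 1) (X 2)
  rw [algebraMap_eq] at hcoeff
  simp only [BR_single_single, actC_single, act_single, map_mul, map_add, map_neg, map_actionCoeff,
    ← Polynomial.aeval_algHom_apply, aeval_X, aeval_C, algebraMap_eq, h₁, h₂,
    Matrix.cons_val_zero, Matrix.cons_val_one, Matrix.cons_val_two, Matrix.tail_cons,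
    Matrix.head_cons, neg_add_rev, neg_add_cancel_right]
  linear_combination Polynomial.aeval (-X 1 : P3) f * Polynomial.aeval (-X 2 : P3) g *
    aeval ![(X 0 + (X 1 + X 2) : P3), X 1, X 2] w * hcoeff

lemma actC_BR (a b : BlockAlg) (w : P3) :
    actC Δ α β (BR a b) w (X 1 + X 2)
      = act Δ α β a (act Δ α β b w (X 2)) (X 1) - act Δ α β b (act Δ α β a w (X 1)) (X 2) := by
  induction a using Finsupp.induction_linear with
  | zero => simp only [BR_zero_left, actC_zero, act_zero_left, act_zero_right, sub_zero]
  | add a a' ha ha' =>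
    rw [BR_add_left, actC_add, ha, ha', act_add_left, act_add_left, act_add_right]
    ring
  | single i f =>
    induction b using Finsupp.induction_linear with
    | zero => simp only [BR_zero_right, actC_zero, act_zero_left, act_zero_right, sub_zero]
    | add b b' hb hb' =>
      rw [BR_add_right, actC_add, hb, hb', act_add_left, act_add_left, act_add_right]
      ring
    | single j g => exact actC_BR_single_single Δ α β i j f g w

end Module

/-- For `p = -1` and any `Δ, α, β ∈ ℂ`, the free rank-one module `M = ℂ[∂]v` with
`L_0 λ v = -(∂+Δλ+α)v`, `L_1 λ v = βv`, `L_i λ v = 0` for `i ≥ 2`, is a conformal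
module over `B(-1)`: `(∂a) λ v = -λ(a λ v)`, `a λ (∂v) = (∂+λ)(a λ v)`, and
`[a λ b]_{λ+μ} v = a λ (b μ v) - b μ (a λ v)`. -/
theorem M_Delta_alpha_beta_is_conformal_module (Δ α β : ℂ) :
    (∀ (a : BlockAlg) (g : Polynomial ℂ),
      act Δ α β (dMul a) (Polynomial.aeval (X 0 : P3) g) (X 1)
        = -(X 1) * act Δ α β a (Polynomial.aeval (X 0 : P3) g) (X 1)) ∧
    (∀ (a : BlockAlg) (g : Polynomial ℂ),
      act Δ α β a (Polynomial.aeval (X 0 : P3) (Polynomial.X * g)) (X 1)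
        = (X 0 + X 1) * act Δ α β a (Polynomial.aeval (X 0 : P3) g) (X 1)) ∧
    (∀ (a b : BlockAlg) (g : Polynomial ℂ),
      actC Δ α β (BR a b) (Polynomial.aeval (X 0 : P3) g) (X 1 + X 2)
        = act Δ α β a (act Δ α β b (Polynomial.aeval (X 0 : P3) g) (X 2)) (X 1)
          - act Δ α β b (act Δ α β a (Polynomial.aeval (X 0 : P3) g) (X 1)) (X 2)) := by
  refine ⟨fun a g => act_dMul Δ α β a _ _, fun a g => ?_, fun a b g => actC_BR Δ α β a b _⟩
  rw [map_mul, Polynomial.aeval_X, act_X_zero_mul]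
end
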